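/- Let A ∈ ℝ^{m×n} with rank(A) = n, and write the eigendecomposition Aᵀ A = V D Vᵀ with V ∈ ℝ^{n×n} orthogonal and D diagonal with positive diagonal entries. Then X* = A V D^{−1/2} Vᵀ satisfies (X*)ᵀ X* = I_n and minimizes ‖X − A‖_F² over all X ∈ ℝ^{m×n} with Xᵀ X = I_n. -/
import Mathlib


open Matrix

noncomputable def frobSq {m n : ℕ} (A : Matrix (Fin m) (Fin n) ℝ) : ℝ :=
  ∑ i, ∑ j, (A i j) ^ 2

lemma frobSq_eq_trace {m n : ℕ} (M : Matrix (Fin m) (Fin n) ℝ) :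
    frobSq M = Matrix.trace (Mᵀ * M) := by
  simp [frobSq, Matrix.trace, Matrix.mul_apply, Matrix.diag, sq]
  exact Finset.sum_comm

lemma trace_mul_diagonal {n : ℕ} (M : Matrix (Fin n) (Fin n) ℝ) (s : Fin n → ℝ) :
    Matrix.trace (M * Matrix.diagonal s) = ∑ i, M i i * s i := by
  simp [Matrix.trace, Matrix.mul_apply, Matrix.diag, Matrix.diagonal]

theorem orthogonal_procrustes {m n : ℕ} (A : Matrix (Fin m) (Fin n) ℝ)
    (hrank : A.rank = n)
    (V : Matrix (Fin n) (Fin n) ℝ) (d : Fin n → ℝ)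
    (hV : Vᵀ * V = 1) (hd : ∀ i, 0 < d i)
    (hdecomp : Aᵀ * A = V * Matrix.diagonal d * Vᵀ) :
    (A * V * Matrix.diagonal (fun i => (Real.sqrt (d i))⁻¹) * Vᵀ)ᵀ *
      (A * V * Matrix.diagonal (fun i => (Real.sqrt (d i))⁻¹) * Vᵀ) = 1 ∧
    ∀ X : Matrix (Fin m) (Fin n) ℝ, Xᵀ * X = 1 →
      frobSq (A * V * Matrix.diagonal (fun i => (Real.sqrt (d i))⁻¹) * Vᵀ - A) ≤
        frobSq (X - A) := by
  set e : Fin n → ℝ := fun i => (Real.sqrt (d i))⁻¹ with he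
  set s : Fin n → ℝ := fun i => Real.sqrt (d i) with hs
  have hspos : ∀ i, 0 < s i := fun i => Real.sqrt_pos.2 (hd i)
  have hss : ∀ i, s i * s i = d i := fun i => Real.mul_self_sqrt (hd i).le
  set Xs : Matrix (Fin m) (Fin n) ℝ := A * V * Matrix.diagonal e * Vᵀ with hXs
  set E : Matrix (Fin n) (Fin n) ℝ := Matrix.diagonal e with hE
  set D : Matrix (Fin n) (Fin n) ℝ := Matrix.diagonal d with hD
  set S : Matrix (Fin n) (Fin n) ℝ := Matrix.diagonal s with hS
  have hVVt : V * Vᵀ = 1 := mul_eq_one_comm.mp hV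
  have hEt : Eᵀ = E := by rw [hE, Matrix.diagonal_transpose]
  -- helper rewrites in right-associated form
  have hVt : ∀ {k : ℕ} (B : Matrix (Fin n) (Fin k) ℝ), Vᵀ * (V * B) = B := by
    intro k B; rw [← Matrix.mul_assoc, hV, Matrix.one_mul]
  have hVv : ∀ {k : ℕ} (B : Matrix (Fin n) (Fin k) ℝ), V * (Vᵀ * B) = B := by
    intro k B; rw [← Matrix.mul_assoc, hVVt, Matrix.one_mul]
  have hAA : ∀ {k : ℕ} (B : Matrix (Fin n) (Fin k) ℝ),
      Aᵀ * (A * B) = V * (D * (Vᵀ * B)) := by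
    intro k B
    rw [← Matrix.mul_assoc, hdecomp]
    simp only [Matrix.mul_assoc]
  have hEDE : E * D * E = 1 := by
    rw [hE, hD, Matrix.diagonal_mul_diagonal, Matrix.diagonal_mul_diagonal]
    have hfun : (fun i => e i * d i * e i) = fun _ => (1 : ℝ) := by
      funext i
      have h1 : e i = (s i)⁻¹ := rfl
      rw [h1, ← hss i]
      field_simp
      exact div_self (hspos i).ne'
    rw [hfun, Matrix.diagonal_one]
  have hEDE' : ∀ {k : ℕ} (B : Matrix (Fin n) (Fin k) ℝ), E * (D * (E * B)) = B := by
    intro k B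
    rw [← Matrix.mul_assoc, ← Matrix.mul_assoc, hEDE, Matrix.one_mul]
  have hES : E * S = 1 := by
    rw [hE, hS, Matrix.diagonal_mul_diagonal]
    have hfun : (fun i => e i * s i) = fun _ => (1 : ℝ) := by
      funext i
      exact inv_mul_cancel₀ (hspos i).ne'
    rw [hfun, Matrix.diagonal_one]
  have hED : E * D = S := by
    rw [hE, hD, hS, Matrix.diagonal_mul_diagonal]
    have hfun : (fun i => e i * d i) = s := by
      funext i
      have h1 : e i = (s i)⁻¹ := rfl
      rw [h1, ← hss i, ← mul_assoc, inv_mul_cancel₀ (hspos i).ne', one_mul]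
    rw [hfun]
  -- Part 1
  have part1 : Xsᵀ * Xs = 1 := by
    rw [hXs]
    simp only [Matrix.transpose_mul, Matrix.transpose_transpose, hEt, Matrix.mul_assoc]
    rw [hAA, hVt, hVt, hEDE', hVVt]
  refine ⟨part1, ?_⟩
  -- A = Xs * (V * (S * Vᵀ))
  have hA : Xs * (V * (S * Vᵀ)) = A := by
    rw [hXs]
    simp only [Matrix.mul_assoc]
    rw [hVt, ← Matrix.mul_assoc E S, hES, Matrix.one_mul, hVVt, Matrix.mul_one]
  -- trace (Xsᵀ * A) = ∑ i, s i
  have htrXs : Matrix.trace (Xsᵀ * A) = ∑ i, s i := by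
    have : Xsᵀ * A = V * (S * Vᵀ) := by
      rw [hXs]
      simp only [Matrix.transpose_mul, Matrix.transpose_transpose, hEt, Matrix.mul_assoc]
      rw [hdecomp]
      simp only [Matrix.mul_assoc]
      rw [hVt, ← Matrix.mul_assoc E D, hED]
    rw [this, Matrix.trace_mul_comm, Matrix.mul_assoc, hV, Matrix.mul_one, hS,
      Matrix.trace_diagonal]
  intro X hX
  -- trace (Xᵀ * A) ≤ ∑ i, s i
  have htrX : Matrix.trace (Xᵀ * A) ≤ ∑ i, s i := by
    have h1 : Xᵀ * A = Xᵀ * Xs * V * S * Vᵀ := by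
      rw [← hA]; simp only [Matrix.mul_assoc]
    have h2 : Matrix.trace (Xᵀ * A) = Matrix.trace ((Vᵀ * (Xᵀ * Xs * V)) * S) := by
      rw [h1, Matrix.trace_mul_comm]
      simp only [Matrix.mul_assoc]
    rw [h2, trace_mul_diagonal]
    have hbound : ∀ i, (Vᵀ * (Xᵀ * Xs * V)) i i ≤ 1 := by
      intro i
      set C : Matrix (Fin m) (Fin n) ℝ := X * V with hC
      set B : Matrix (Fin m) (Fin n) ℝ := Xs * V with hB
      have hMC : (Vᵀ * (Xᵀ * Xs * V)) i i = ∑ k, C k i * B k i := by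
        have : Vᵀ * (Xᵀ * Xs * V) = Cᵀ * B := by
          rw [hC, hB, Matrix.transpose_mul]
          simp only [Matrix.mul_assoc]
        rw [this, Matrix.mul_apply]
        simp [Matrix.transpose_apply]
      have hCC : ∑ k, C k i ^ 2 = 1 := by
        have : Cᵀ * C = 1 := by
          rw [hC, Matrix.transpose_mul]
          simp only [Matrix.mul_assoc]
          rw [show Xᵀ * (X * V) = V from by rw [← Matrix.mul_assoc, hX, Matrix.one_mul], hV]
        have h := congrArg (fun M => M i i) this
        simp only [Matrix.mul_apply, Matrix.one_apply_eq] at h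
        simpa [Matrix.transpose_apply, sq] using h
      have hBB : ∑ k, B k i ^ 2 = 1 := by
        have : Bᵀ * B = 1 := by
          rw [hB, Matrix.transpose_mul]
          simp only [Matrix.mul_assoc]
          rw [show Xsᵀ * (Xs * V) = V from by rw [← Matrix.mul_assoc, part1, Matrix.one_mul], hV]
        have h := congrArg (fun M => M i i) this
        simp only [Matrix.mul_apply, Matrix.one_apply_eq] at h
        simpa [Matrix.transpose_apply, sq] using h
      rw [hMC]
      nlinarith [Finset.sum_mul_sq_le_sq_mul_sq Finset.univ (fun k => C k i) (fun k => B k i),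
        hCC, hBB]
    calc ∑ i, (Vᵀ * (Xᵀ * Xs * V)) i i * s i
        ≤ ∑ i, 1 * s i :=
          Finset.sum_le_sum fun i _ => mul_le_mul_of_nonneg_right (hbound i) (hspos i).le
      _ = ∑ i, s i := by simp
  -- expansion of frobSq
  have hexp : ∀ Y : Matrix (Fin m) (Fin n) ℝ, Yᵀ * Y = 1 →
      frobSq (Y - A) = Matrix.trace (1 : Matrix (Fin n) (Fin n) ℝ)
        - 2 * Matrix.trace (Yᵀ * A) + Matrix.trace (Aᵀ * A) := by
    intro Y hY
    rw [frobSq_eq_trace]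
    have : (Y - A)ᵀ * (Y - A) = Yᵀ * Y - Yᵀ * A - Aᵀ * Y + Aᵀ * A := by
      simp only [Matrix.transpose_sub, Matrix.sub_mul, Matrix.mul_sub]
      abel
    rw [this, hY]
    have htr : Matrix.trace (Aᵀ * Y) = Matrix.trace (Yᵀ * A) := by
      rw [← Matrix.trace_transpose (Aᵀ * Y), Matrix.transpose_mul, Matrix.transpose_transpose]
    simp only [Matrix.trace_add, Matrix.trace_sub, htr]
    ring
  rw [hexp Xs part1, hexp X hX, htrXs]
  linarith
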